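/- arXiv:1007.4896 — 3 statements merged into one kernel-verified Lean document; each statement's English description precedes it below -/
import Mathlib

section
/- Let 𝕍 carry a strict Lie 2-algebra structure given by skew-symmetric bilinear functor data F satisfying the Jacobi identity, with bracket [ξ,η] := ad_F(ξ)·η on V₀ ⊕ V₁, and let G_ad := {(ad_F(ξ), ξ) : ξ ∈ V₀ ⊕ V₁} be the corresponding Dirac structure of gl(𝕍) ⊕ 𝕍. Then the normalizer N_{G_ad} := {N ∈ End⁰ ⊕ End¹ : {N, l} ∈ G_ad for all l ∈ G_ad} is a sub-Lie 2-algebra of gl(𝕍), and N ∈ N_{G_ad} if and only if N is a derivation of the bracket: N·[ξ,η] = [N·ξ, η] + [ξ, N·η] for all ξ, η ∈ V₀ ⊕ V₁. -/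
open LinearMap

noncomputable section

namespace Omni

variable {V₀ V₁ : Type*}
  [AddCommGroup V₀] [Module ℝ V₀] [AddCommGroup V₁] [Module ℝ V₁]

variable (d : V₁ →ₗ[ℝ] V₀)

/-- `End⁰`: pairs `(A₀, A₁)` of endomorphisms with `A₀ ∘ d = d ∘ A₁`. -/
def End0 : Submodule ℝ ((V₀ →ₗ[ℝ] V₀) × (V₁ →ₗ[ℝ] V₁)) where
  carrier := {A | A.1 ∘ₗ d = d ∘ₗ A.2}
  add_mem' := by
    intro a b ha hb
    simp only [Set.mem_setOf_eq] at *
    simp [add_comp, comp_add, ha, hb]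
  zero_mem' := by
    simp only [Set.mem_setOf_eq]
    simp
  smul_mem' := by
    intro c a ha
    simp only [Set.mem_setOf_eq] at *
    simp [smul_comp, comp_smul, ha]

lemma mem_End0 {A : (V₀ →ₗ[ℝ] V₀) × (V₁ →ₗ[ℝ] V₁)} :
    A ∈ End0 d ↔ A.1 ∘ₗ d = d ∘ₗ A.2 := Iff.rfl

/-- Morphism space of `gl(𝕍)`:  `End⁰ ⊕ End¹`. -/
abbrev Gl := ↥(End0 d) × (V₀ →ₗ[ℝ] V₁)

/-- Morphism space of the omni-Lie 2-algebra `gl(𝕍) ⊕ 𝕍`. -/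
abbrev E := Gl d × (V₀ × V₁)

/-- `δ : End¹ → End⁰`, `δφ = (d∘φ, φ∘d)`. -/
def δm (φ : V₀ →ₗ[ℝ] V₁) : End0 d :=
  ⟨(d ∘ₗ φ, φ ∘ₗ d), by
    rw [mem_End0]
    exact (comp_assoc _ _ _).symm⟩

/-- commutator bracket on `End⁰`. -/
def bkt0 (A B : End0 d) : End0 d :=
  ⟨(A.1.1 ∘ₗ B.1.1 - B.1.1 ∘ₗ A.1.1, A.1.2 ∘ₗ B.1.2 - B.1.2 ∘ₗ A.1.2), by
    have hA : A.1.1 ∘ₗ d = d ∘ₗ A.1.2 := A.2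
    have hB : B.1.1 ∘ₗ d = d ∘ₗ B.1.2 := B.2
    rw [mem_End0]
    have ha : ∀ x, A.1.1 (d x) = d (A.1.2 x) := fun x => LinearMap.congr_fun hA x
    have hb : ∀ x, B.1.1 (d x) = d (B.1.2 x) := fun x => LinearMap.congr_fun hB x
    ext m
    simp [ha, hb]⟩

/-- `[A,φ] = A₁ ∘ φ - φ ∘ A₀` for `A ∈ End⁰`, `φ ∈ End¹`. -/
def bktAφ (A : End0 d) (φ : V₀ →ₗ[ℝ] V₁) : V₀ →ₗ[ℝ] V₁ :=
  A.1.2 ∘ₗ φ - φ ∘ₗ A.1.1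

/-- `[φ,ψ]_δ = φ∘d∘ψ - ψ∘d∘φ`. -/
def bktδ (φ ψ : V₀ →ₗ[ℝ] V₁) : V₀ →ₗ[ℝ] V₁ :=
  φ ∘ₗ d ∘ₗ ψ - ψ ∘ₗ d ∘ₗ φ

/-- bracket on the morphism space `End⁰ ⊕ End¹` of `gl(𝕍)`. -/
def bkt (X Y : Gl d) : Gl d :=
  (bkt0 d X.1 Y.1, bktAφ d X.1 Y.2 - bktAφ d Y.1 X.2 + bktδ d X.2 Y.2)

/-- action of `gl(𝕍)` on `𝕍`:  `(A,φ)·(u,m) = (A₀u, A₁m + φ(u+dm))`. -/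
def act (X : Gl d) (ξ : V₀ × V₁) : V₀ × V₁ :=
  (X.1.1.1 ξ.1, X.1.1.2 ξ.2 + X.2 (ξ.1 + d ξ.2))

/-- the `𝕍`-valued pairing on `E`. -/
def pairE (e₁ e₂ : E d) : V₀ × V₁ :=
  (2⁻¹ : ℝ) • (act d e₁.1 e₂.2 + act d e₂.1 e₁.2)

/-- pairing at the level of objects. -/
def pairObj (x y : (End0 d) × V₀) : V₀ :=
  (2⁻¹ : ℝ) • (x.1.1.1 y.2 + y.1.1.1 x.2)

/-- the Courant bracket on `E`. -/
def courant (e₁ e₂ : E d) : E d :=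
  (bkt d e₁.1 e₂.1, (2⁻¹ : ℝ) • (act d e₁.1 e₂.2 - act d e₂.1 e₁.2))

/-- Courant bracket at the level of objects. -/
def courantObj (x y : (End0 d) × V₀) : (End0 d) × V₀ :=
  (bkt0 d x.1 y.1, (2⁻¹ : ℝ) • (x.1.1.1 y.2 - y.1.1.1 x.2))

/-- the Dorfman bracket on `E`. -/
def dorfman (e₁ e₂ : E d) : E d :=
  (bkt d e₁.1 e₂.1, act d e₁.1 e₂.2)

/-- source of a morphism of `gl(𝕍) ⊕ 𝕍`. -/
def sE (e : E d) : (End0 d) × V₀ := (e.1.1, e.2.1)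

/-- target of a morphism of `gl(𝕍) ⊕ 𝕍`. -/
def tE (e : E d) : (End0 d) × V₀ := (e.1.1 + δm d e.1.2, e.2.1 + d e.2.2)

/-- vertical composition of morphisms of `gl(𝕍) ⊕ 𝕍`. -/
def compE (e e' : E d) : E d := ((e.1.1, e.1.2 + e'.1.2), (e.2.1, e.2.2 + e'.2.2))

/-- vertical composition of morphisms of `𝕍`. -/
def compV (x y : V₀ × V₁) : V₀ × V₁ := (x.1, x.2 + y.2)

/-- orthogonal complement w.r.t. the `𝕍`-valued pairing. -/
def perp (L : Set (E d)) : Set (E d) := {e | ∀ l ∈ L, pairE d e l = 0}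

/-- bilinear functor data `(F₀, F_a, F_b)` for `𝕍`. -/
structure BilinData where
  F0 : V₀ →ₗ[ℝ] V₀ →ₗ[ℝ] V₀
  Fa : V₀ →ₗ[ℝ] V₁ →ₗ[ℝ] V₁
  Fb : V₁ →ₗ[ℝ] V₀ →ₗ[ℝ] V₁
  ha : ∀ u n, d (Fa u n) = F0 u (d n)
  hb : ∀ m v, d (Fb m v) = F0 (d m) v
  hc : ∀ m n, Fa (d m) n = Fb m (d n)

/-- `ad_F (u,m) = ((F₀(u,·), F_a(u,·)), F_b(m,·))`. -/
def adF (F : BilinData d) (ξ : V₀ × V₁) : Gl d :=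
  (⟨(F.F0 ξ.1, F.Fa ξ.1), by
      rw [mem_End0]
      ext n
      exact (F.ha ξ.1 n).symm⟩, F.Fb ξ.2)

/-- the graph `G_F = {(ad_F ξ, ξ)}`. -/
def graphF (F : BilinData d) : Set (E d) := {e | ∃ ξ : V₀ × V₁, e = (adF d F ξ, ξ)}

/-- an isomorphism `μ = (μ₀, μ₁, μ₂)` from the Lie 2-algebra `gl(𝕍)` to itself. -/
structure GlIso where
  μ0 : (End0 d) ≃ₗ[ℝ] (End0 d)
  μ1 : (Gl d) ≃ₗ[ℝ] (Gl d)
  hs : ∀ X : Gl d, (μ1 X).1 = μ0 X.1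
  ht : ∀ X : Gl d, (μ1 X).1 + δm d (μ1 X).2 = μ0 (X.1 + δm d X.2)
  hid : ∀ A : End0 d, μ1 (A, 0) = (μ0 A, 0)
  hcomp : ∀ (A : End0 d) (φ φ' : V₀ →ₗ[ℝ] V₁),
    μ1 (A, φ + φ') = ((μ1 (A, φ)).1, (μ1 (A, φ)).2 + (μ1 (A + δm d φ, φ')).2)
  μ2 : (End0 d) →ₗ[ℝ] (End0 d) →ₗ[ℝ] Gl d
  hskew : ∀ A B, μ2 A B = - μ2 B A
  hs2 : ∀ A B, (μ2 A B).1 = μ0 (bkt0 d A B)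
  ht2 : ∀ A B, (μ2 A B).1 + δm d (μ2 A B).2 = bkt0 d (μ0 A) (μ0 B)
  hnat : ∀ (A B : End0 d) (φ ψ : V₀ →ₗ[ℝ] V₁),
    (μ2 A B).2 + (bkt d (μ1 (A, φ)) (μ1 (B, ψ))).2
      = (μ1 (bkt d (A, φ) (B, ψ))).2 + (μ2 (A + δm d φ) (B + δm d ψ)).2
  hcoh : ∀ A B C : End0 d,
    (μ2 (bkt0 d A B) C).2 + (bkt d (μ2 A B) ((μ0 C, 0) : Gl d)).2
      = (μ2 A (bkt0 d B C)).2 + (μ2 B (bkt0 d C A)).2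
        + (bkt d ((μ0 A, 0) : Gl d) (μ2 B C)).2
        + (bkt d ((μ0 B, 0) : Gl d) (μ2 C A)).2

/-- the `μ`-twisted pairing on `E`. -/
def pairμ (μ : GlIso d) (e₁ e₂ : E d) : V₀ × V₁ :=
  (2⁻¹ : ℝ) • (act d (μ.μ1 e₁.1) e₂.2 + act d (μ.μ1 e₂.1) e₁.2)

/-- the `μ`-twisted Courant bracket on `E`. -/
def courantμ (μ : GlIso d) (e₁ e₂ : E d) : E d :=
  (bkt d e₁.1 e₂.1, (2⁻¹ : ℝ) • (act d (μ.μ1 e₁.1) e₂.2 - act d (μ.μ1 e₂.1) e₁.2))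

/-- orthogonal complement w.r.t. the `μ`-twisted pairing. -/
def perpμ (μ : GlIso d) (L : Set (E d)) : Set (E d) := {e | ∀ l ∈ L, pairμ d μ e l = 0}

/-- the `μ`-twisted Dorfman bracket at the level of objects. -/
def dorfObjμ (μ : GlIso d) (x y : (End0 d) × V₀) : (End0 d) × V₀ :=
  (bkt0 d x.1 y.1, (μ.μ0 x.1).1.1 y.2)

end Omni

end


/-!
The Dorfman bracket of `(N, 0)` with `(ad_F ξ, ξ)` is `([N, ad_F ξ], N·ξ)`, so `N` normalizes the
graph of `ad_F` exactly when `[N, ad_F ξ] = ad_F (N·ξ)` for all `ξ`. Since `gl(𝕍)` acts faithfully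
on `𝕍` and this action turns the bracket into the commutator, that is the derivation identity.
Derivations of any bilinear bracket are closed under commutators, and the derivation identity for
`δφ = (d∘φ, φ∘d)` follows from that for `(0, φ)` through the compatibilities of `F₀, F_a, F_b`
with `d`.
-/

namespace Omni

variable {V₀ V₁ : Type*} [AddCommGroup V₀] [Module ℝ V₀] [AddCommGroup V₁] [Module ℝ V₁]
variable (d : V₁ →ₗ[ℝ] V₀)

lemma Gl.fst_apply_d (X : Gl d) (m : V₁) : X.1.1.1 (d m) = d (X.1.1.2 m) :=
  LinearMap.congr_fun X.1.2 m

lemma act_mk (X : Gl d) (u : V₀) (m : V₁) :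
    act d X (u, m) = (X.1.1.1 u, X.1.1.2 m + X.2 (u + d m)) := rfl

lemma act_add (X : Gl d) (η θ : V₀ × V₁) :
    act d X (η + θ) = act d X η + act d X θ := by
  simp only [act, Prod.fst_add, Prod.snd_add, map_add, Prod.mk_add_mk, Prod.mk.injEq, true_and]
  abel

lemma act_sub (X : Gl d) (η θ : V₀ × V₁) :
    act d X (η - θ) = act d X η - act d X θ := by
  simp only [act, Prod.fst_sub, Prod.snd_sub, map_sub, map_add, Prod.mk_sub_mk, Prod.mk.injEq,
    true_and]
  abel

lemma sub_act (X Y : Gl d) (η : V₀ × V₁) :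
    act d (X - Y) η = act d X η - act d Y η := by
  simp only [act, Prod.fst_sub, Prod.snd_sub, Submodule.coe_sub, LinearMap.sub_apply,
    Prod.mk_sub_mk, Prod.mk.injEq, true_and]
  abel

lemma act_bkt (X Y : Gl d) (η : V₀ × V₁) :
    act d (bkt d X Y) η = act d X (act d Y η) - act d Y (act d X η) := by
  simp only [act, bkt, bkt0, bktAφ, bktδ, LinearMap.sub_apply, LinearMap.add_apply,
    LinearMap.comp_apply, Prod.mk_sub_mk, Prod.mk.injEq, map_add, Gl.fst_apply_d, true_and]
  abel

lemma act_injective : Function.Injective (act d) := by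
  intro X Y h
  have hφ : X.2 = Y.2 := LinearMap.ext fun u => by
    simpa [act] using congrArg Prod.snd (congrFun h (u, 0))
  have hA₀ : X.1.1.1 = Y.1.1.1 := LinearMap.ext fun u => congrArg Prod.fst (congrFun h (u, 0))
  have hA₁ : X.1.1.2 = Y.1.1.2 := LinearMap.ext fun m => by
    simpa [act, hφ] using congrArg Prod.snd (congrFun h (0, m))
  exact Prod.ext (Subtype.ext (Prod.ext hA₀ hA₁)) hφ

variable {d}

lemma adF_sub (F : BilinData d) (ξ η : V₀ × V₁) :
    adF d F (ξ - η) = adF d F ξ - adF d F η := by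
  ext <;> simp [adF]

def IsDerivation (F : BilinData d) (N : Gl d) : Prop :=
  ∀ ξ η : V₀ × V₁,
    act d N (act d (adF d F ξ) η) = act d (adF d F (act d N ξ)) η + act d (adF d F ξ) (act d N η)

lemma dorfman_mem_graphF_iff (F : BilinData d) (N : Gl d) :
    (∀ l ∈ graphF d F, dorfman d ((N, (0 : V₀ × V₁)) : E d) l ∈ graphF d F) ↔
      ∀ ξ, bkt d N (adF d F ξ) = adF d F (act d N ξ) := by
  constructor
  · intro h ξ
    obtain ⟨ζ, hζ⟩ := h (adF d F ξ, ξ) ⟨ξ, rfl⟩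
    obtain ⟨hbkt, hact⟩ := Prod.mk.inj hζ
    rw [hbkt, ← hact]
  · rintro h _ ⟨ξ, rfl⟩
    exact ⟨act d N ξ, by rw [dorfman, h ξ]⟩

lemma bkt_adF_eq_iff_isDerivation (F : BilinData d) (N : Gl d) :
    (∀ ξ, bkt d N (adF d F ξ) = adF d F (act d N ξ)) ↔ IsDerivation F N := by
  constructor
  · intro h ξ η
    rw [← h ξ, act_bkt]
    abel
  · intro h ξ
    refine act_injective d (funext fun η => ?_)
    rw [act_bkt, h ξ η]
    abel

lemma IsDerivation.bkt {F : BilinData d} {N N' : Gl d} (hN : IsDerivation F N)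
    (hN' : IsDerivation F N') : IsDerivation F (bkt d N N') := by
  intro ξ η
  rw [act_bkt, hN ξ η, hN' ξ η, act_add, act_add,
    hN (act d N' ξ) η, hN ξ (act d N' η), hN' (act d N ξ) η, hN' ξ (act d N η),
    act_bkt, act_bkt, adF_sub, sub_act, act_sub]
  abel

lemma IsDerivation.δm {F : BilinData d} {φ : V₀ →ₗ[ℝ] V₁}
    (hφ : IsDerivation F ((0 : End0 d), φ)) :
    IsDerivation F ((δm d φ, (0 : V₀ →ₗ[ℝ] V₁)) : Gl d) := by
  have hF0 : ∀ u v, φ (F.F0 u v) = F.Fb (φ u) v + F.Fa u (φ v) := fun u v => by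
    simpa [act, adF] using congrArg Prod.snd (hφ (u, 0) (v, 0))
  rintro ⟨u, m⟩ ⟨v, n⟩
  simp only [act_mk, adF, Omni.δm, LinearMap.comp_apply, LinearMap.zero_apply, add_zero,
    map_add, hF0, F.ha, F.hb, F.hc, Prod.mk_add_mk, Prod.mk.injEq, true_and]
  abel

end Omni

open Omni in
theorem normalizer_of_graph_is_derivations_general {V₀ V₁ : Type*} [AddCommGroup V₀] [Module ℝ V₀] [AddCommGroup V₁] [Module ℝ V₁]
    (d : V₁ →ₗ[ℝ] V₀)
    (F : BilinData d)
    (NG : Set (Gl d))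
    (hNG : NG = {N : Gl d |
      ∀ l ∈ graphF d F, dorfman d ((N, (0 : V₀ × V₁)) : E d) l ∈ graphF d F}) :
    -- N_{G_ad} is a sub-Lie 2-algebra of gl(𝕍)
    (∀ φ : V₀ →ₗ[ℝ] V₁, (((0 : End0 d), φ) : Gl d) ∈ NG →
      ((δm d φ, (0 : V₀ →ₗ[ℝ] V₁)) : Gl d) ∈ NG) ∧
    (∀ N ∈ NG, ∀ N' ∈ NG, bkt d N N' ∈ NG) ∧
    -- N ∈ N_{G_ad} iff N is a derivation of the bracket
    (∀ N : Gl d, N ∈ NG ↔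
      ∀ ξ η : V₀ × V₁,
        act d N (act d (adF d F ξ) η)
          = act d (adF d F (act d N ξ)) η + act d (adF d F ξ) (act d N η)) := by
  have hNG_iff : ∀ N, N ∈ NG ↔ IsDerivation F N := fun N => by
    rw [hNG, Set.mem_ofPred_eq, dorfman_mem_graphF_iff, bkt_adF_eq_iff_isDerivation]
  refine ⟨fun φ hφ => ?_, fun N hN N' hN' => ?_, hNG_iff⟩
  · exact (hNG_iff _).2 ((hNG_iff _).1 hφ).δm
  · exact (hNG_iff _).2 (((hNG_iff N).1 hN).bkt ((hNG_iff N').1 hN'))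

open Omni in
/-- For a strict Lie 2-algebra structure on `𝕍` given by skew-symmetric bilinear functor
data `F` satisfying the Jacobi identity, with bracket `[ξ,η] = ad_F(ξ)·η` and Dirac
structure `G_ad` the graph of `ad_F`, the normalizer `N_{G_ad}` is a sub-Lie 2-algebra
of `gl(𝕍)`, and `N ∈ N_{G_ad}` iff `N` is a derivation of the bracket. -/
theorem normalizer_of_graph_is_derivations {V₀ V₁ : Type*} [AddCommGroup V₀] [Module ℝ V₀] [AddCommGroup V₁] [Module ℝ V₁]
    [FiniteDimensional ℝ V₀] [FiniteDimensional ℝ V₁]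
    (d : V₁ →ₗ[ℝ] V₀)
    (F : BilinData d)
    (hFskew : (∀ u v : V₀, F.F0 u v = - F.F0 v u) ∧
      (∀ (u : V₀) (n : V₁), F.Fa u n = - F.Fb n u))
    (hFjac : ∀ ξ η θ : V₀ × V₁,
      act d (adF d F ξ) (act d (adF d F η) θ)
        = act d (adF d F (act d (adF d F ξ) η)) θ
          + act d (adF d F η) (act d (adF d F ξ) θ))
    (NG : Set (Gl d))
    (hNG : NG = {N : Gl d |
      ∀ l ∈ graphF d F, dorfman d ((N, (0 : V₀ × V₁)) : E d) l ∈ graphF d F}) :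
    -- N_{G_ad} is a sub-Lie 2-algebra of gl(𝕍)
    (∀ φ : V₀ →ₗ[ℝ] V₁, (((0 : End0 d), φ) : Gl d) ∈ NG →
      ((δm d φ, (0 : V₀ →ₗ[ℝ] V₁)) : Gl d) ∈ NG) ∧
    (∀ N ∈ NG, ∀ N' ∈ NG, bkt d N N' ∈ NG) ∧
    -- N ∈ N_{G_ad} iff N is a derivation of the bracket
    (∀ N : Gl d, N ∈ NG ↔
      ∀ ξ η : V₀ × V₁,
        act d N (act d (adF d F ξ) η)
          = act d (adF d F (act d N ξ)) η + act d (adF d F ξ) (act d N η)) :=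
  normalizer_of_graph_is_derivations_general d F NG hNG
end

section
/- Let μ = (μ₀, μ₁, μ₂) be an isomorphism of gl(𝕍). For objects e₁ = (A,u), e₂ = (B,v), e₃ = (C,w) of gl(𝕍) ⊕ 𝕍: (i) {{e₁,e₂}_μ, e₃}_μ = ([[A,B],C], μ₀([A,B])·w); (ii) {e₁,{e₂,e₃}_μ}_μ − {e₂,{e₁,e₃}_μ}_μ = ([[A,B],C], [μ₀(A),μ₀(B)]·w); and (iii) writing μ₂(A,B) = (P, χ) ∈ End⁰ ⊕ End¹, the element J_{e₁,e₂,e₃} := ([[A,B],C], 0, P₀w, χ(w)) is a morphism of gl(𝕍) ⊕ 𝕍 whose source is {{e₁,e₂}_μ, e₃}_μ and whose target is {e₁,{e₂,e₃}_μ}_μ − {e₂,{e₁,e₃}_μ}_μ. -/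
open LinearMap

/-!
On objects the twisted Dorfman bracket only involves `μ₀`, so (i) holds by definition and (ii)
is the Jacobi identity for commutators, read in Leibniz form. For (iii), write `μ₂(A,B) = (P, χ)`:
the source of `μ₂(A,B)` is `μ₀[A,B]`, so `P = μ₀[A,B]` and the source of `J` is (i); its target
is `([[A,B],C], (P₀ + d ∘ χ) w)`, and `P + δχ = [μ₀A, μ₀B]` is the target of `μ₂(A,B)`, which
gives (ii).
-/

namespace Omni

variable {V₀ V₁ : Type*} [AddCommGroup V₀] [Module ℝ V₀] [AddCommGroup V₁] [Module ℝ V₁]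
  (d : V₁ →ₗ[ℝ] V₀)

lemma bkt0_bkt0 (A B C : End0 d) :
    bkt0 d (bkt0 d A B) C = bkt0 d A (bkt0 d B C) - bkt0 d B (bkt0 d A C) :=
  Subtype.ext <| by
    simp only [bkt0, AddSubgroupClass.coe_sub, Prod.mk_sub_mk, Prod.mk.injEq]
    constructor <;> ext <;>
      simp only [LinearMap.sub_apply, coe_comp, Function.comp_apply, map_sub] <;> abel

lemma dorfObjμ_dorfObjμ_sub_swap (μ : GlIso d) (x y z : End0 d × V₀) :
    dorfObjμ d μ x (dorfObjμ d μ y z) - dorfObjμ d μ y (dorfObjμ d μ x z)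
      = (bkt0 d (bkt0 d x.1 y.1) z.1, (bkt0 d (μ.μ0 x.1) (μ.μ0 y.1)).1.1 z.2) := by
  refine Prod.ext (bkt0_bkt0 d _ _ _).symm ?_
  simp [dorfObjμ, bkt0]

lemma δm_zero : δm d 0 = 0 :=
  Subtype.ext <| by simp [δm]

lemma GlIso.μ2_apply_add_d_apply (μ : GlIso d) (A B : End0 d) (w : V₀) :
    (μ.μ2 A B).1.1.1 w + d ((μ.μ2 A B).2 w) = (bkt0 d (μ.μ0 A) (μ.μ0 B)).1.1 w :=
  congr($(μ.ht2 A B).1.1 w)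

/-- The Jacobiator `J = ([[A,B],C], 0, P₀ w, χ w)`, where `μ₂(A,B) = (P, χ)`. -/
def jacobiator (μ : GlIso d) (A B C : End0 d) (w : V₀) : E d :=
  ((bkt0 d (bkt0 d A B) C, 0), ((μ.μ2 A B).1.1.1 w, (μ.μ2 A B).2 w))

lemma sE_jacobiator (μ : GlIso d) (A B C : End0 d) (w : V₀) :
    sE d (jacobiator d μ A B C w) = (bkt0 d (bkt0 d A B) C, (μ.μ0 (bkt0 d A B)).1.1 w) := by
  simp [jacobiator, sE, μ.hs2]

lemma tE_jacobiator (μ : GlIso d) (A B C : End0 d) (w : V₀) :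
    tE d (jacobiator d μ A B C w)
      = (bkt0 d (bkt0 d A B) C, (bkt0 d (μ.μ0 A) (μ.μ0 B)).1.1 w) := by
  simp only [jacobiator, tE, δm_zero, add_zero, μ.μ2_apply_add_d_apply]

end Omni

open Omni in
theorem twisted_jacobiator_general {V₀ V₁ : Type*} [AddCommGroup V₀] [Module ℝ V₀] [AddCommGroup V₁] [Module ℝ V₁]
    (d : V₁ →ₗ[ℝ] V₀) (μ : GlIso d)
    (A B C : End0 d) (u v w : V₀) :
    -- (i)
    dorfObjμ d μ (dorfObjμ d μ (A, u) (B, v)) (C, w)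
      = (bkt0 d (bkt0 d A B) C, (μ.μ0 (bkt0 d A B)).1.1 w) ∧
    -- (ii)
    dorfObjμ d μ (A, u) (dorfObjμ d μ (B, v) (C, w))
        - dorfObjμ d μ (B, v) (dorfObjμ d μ (A, u) (C, w))
      = (bkt0 d (bkt0 d A B) C, (bkt0 d (μ.μ0 A) (μ.μ0 B)).1.1 w) ∧
    -- (iii) J := ([[A,B],C], 0, P₀w, χ(w)) with μ₂(A,B) = (P,χ) has the right
    -- source and target
    (sE d (((bkt0 d (bkt0 d A B) C, (0 : V₀ →ₗ[ℝ] V₁)),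
            ((μ.μ2 A B).1.1.1 w, (μ.μ2 A B).2 w)) : E d)
        = dorfObjμ d μ (dorfObjμ d μ (A, u) (B, v)) (C, w) ∧
     tE d (((bkt0 d (bkt0 d A B) C, (0 : V₀ →ₗ[ℝ] V₁)),
            ((μ.μ2 A B).1.1.1 w, (μ.μ2 A B).2 w)) : E d)
        = dorfObjμ d μ (A, u) (dorfObjμ d μ (B, v) (C, w))
            - dorfObjμ d μ (B, v) (dorfObjμ d μ (A, u) (C, w))) := by
  have leibniz := dorfObjμ_dorfObjμ_sub_swap d μ (A, u) (B, v) (C, w)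
  exact ⟨rfl, leibniz, sE_jacobiator d μ A B C w, (tE_jacobiator d μ A B C w).trans leibniz.symm⟩

open Omni in
/-- For an isomorphism `μ` of `gl(𝕍)`, the Jacobiator
`J = ([[A,B],C], μ₂(A,B)(w))` is a morphism from `{{e₁,e₂}_μ, e₃}_μ` to
`{e₁,{e₂,e₃}_μ}_μ − {e₂,{e₁,e₃}_μ}_μ` on objects of `gl(𝕍) ⊕ 𝕍`. -/
theorem twisted_jacobiator {V₀ V₁ : Type*} [AddCommGroup V₀] [Module ℝ V₀] [AddCommGroup V₁] [Module ℝ V₁]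
    [FiniteDimensional ℝ V₀] [FiniteDimensional ℝ V₁]
    (d : V₁ →ₗ[ℝ] V₀) (μ : GlIso d)
    (A B C : End0 d) (u v w : V₀) :
    -- (i)
    dorfObjμ d μ (dorfObjμ d μ (A, u) (B, v)) (C, w)
      = (bkt0 d (bkt0 d A B) C, (μ.μ0 (bkt0 d A B)).1.1 w) ∧
    -- (ii)
    dorfObjμ d μ (A, u) (dorfObjμ d μ (B, v) (C, w))
        - dorfObjμ d μ (B, v) (dorfObjμ d μ (A, u) (C, w))
      = (bkt0 d (bkt0 d A B) C, (bkt0 d (μ.μ0 A) (μ.μ0 B)).1.1 w) ∧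
    -- (iii) J := ([[A,B],C], 0, P₀w, χ(w)) with μ₂(A,B) = (P,χ) has the right
    -- source and target
    (sE d (((bkt0 d (bkt0 d A B) C, (0 : V₀ →ₗ[ℝ] V₁)),
            ((μ.μ2 A B).1.1.1 w, (μ.μ2 A B).2 w)) : E d)
        = dorfObjμ d μ (dorfObjμ d μ (A, u) (B, v)) (C, w) ∧
     tE d (((bkt0 d (bkt0 d A B) C, (0 : V₀ →ₗ[ℝ] V₁)),
            ((μ.μ2 A B).1.1.1 w, (μ.μ2 A B).2 w)) : E d)
        = dorfObjμ d μ (A, u) (dorfObjμ d μ (B, v) (C, w))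
            - dorfObjμ d μ (B, v) (dorfObjμ d μ (A, u) (C, w))) :=
  twisted_jacobiator_general d μ A B C u v w
end

section
/- Let g be a finite-dimensional real Lie algebra with a symmetric invariant bilinear form B (B([x,y],z) + B(y,[x,z]) = 0 for all x,y,z ∈ g). Suppose α : End(g) × ℝ → Hom(g,ℝ) is a linear map satisfying α(ad_u, r)(v) = B(u,v) for all u, v ∈ g and r ∈ ℝ. Then, with the action [(A₀,A₁), φ] := A₁∘φ − φ∘A₀ of End(g) × ℝ = End(g) × End(ℝ) on Hom(g,ℝ), the coboundary of α satisfies, for all u, v, w ∈ g: dα((ad_u,0),(ad_v,0))(w) := ([(ad_u,0), α(ad_v,0)] − [(ad_v,0), α(ad_u,0)] − α([ad_u,ad_v], 0))(w) = B([u,v], w). Consequently μ₂((ad_u,0),(ad_v,0)) applied to the object w yields the pair ([[u,v],w], B([u,v],w)), which is the Jacobiator l₃(u,v,w) = B([u,v],w) of the string-type Lie 2-algebra associated to (g, [·,·], B). -/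
open LinearMap

theorem LinearMap.BilinForm.lie_apply_eq_apply_lie_of_lieInvariant {R L : Type*} [CommRing R]
    [LieRing L] [LieAlgebra R L] {B : LinearMap.BilinForm R L} (hB : B.lieInvariant L)
    (u v w : L) : B ⁅u, v⁆ w = B u ⁅v, w⁆ :=
  calc B ⁅u, v⁆ w = -B ⁅v, u⁆ w := by rw [← lie_skew u v, map_neg, LinearMap.neg_apply]
    _ = B u ⁅v, w⁆ := by rw [hB, neg_neg]

namespace StringLie2

open LieAlgebra

variable {R L : Type*} [CommRing R] [LieRing L] [LieAlgebra R L]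

-- The second factor `R` stands for `End(R)`, acting on `R` by multiplication.
def endAction (X : (L →ₗ[R] L) × R) (φ : L →ₗ[R] R) : L →ₗ[R] R :=
  X.2 • φ - φ ∘ₗ X.1

def endCommutator (X Y : (L →ₗ[R] L) × R) : (L →ₗ[R] L) × R :=
  (X.1 ∘ₗ Y.1 - Y.1 ∘ₗ X.1, X.2 * Y.2 - Y.2 * X.2)

def coboundary (α : (L →ₗ[R] L) × R → (L →ₗ[R] R)) (X Y : (L →ₗ[R] L) × R) : L →ₗ[R] R :=
  endAction X (α Y) - endAction Y (α X) - α (endCommutator X Y)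

theorem endCommutator_ad_ad (u v : L) :
    endCommutator ((ad R L u : L →ₗ[R] L), 0) ((ad R L v : L →ₗ[R] L), 0)
      = ((ad R L ⁅u, v⁆ : L →ₗ[R] L), 0) := by
  refine Prod.ext ?_ (sub_self _)
  ext w
  exact (lie_lie u v w).symm

theorem coboundary_ad_ad {B : LinearMap.BilinForm R L} (hB : B.lieInvariant L)
    {α : (L →ₗ[R] L) × R → (L →ₗ[R] R)}
    (hα : ∀ u v : L, α ((ad R L u : L →ₗ[R] L), 0) v = B u v) (u v : L) :
    coboundary α ((ad R L u : L →ₗ[R] L), 0) ((ad R L v : L →ₗ[R] L), 0) = B ⁅u, v⁆ := by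
  ext w
  simp only [coboundary, endAction, endCommutator_ad_ad, LinearMap.sub_apply, zero_smul,
    LinearMap.zero_apply, LinearMap.comp_apply, ad_apply, hα]
  -- by invariance each of the three terms is `± B ⁅u, v⁆ w`
  rw [← B.lie_apply_eq_apply_lie_of_lieInvariant hB, ← B.lie_apply_eq_apply_lie_of_lieInvariant hB,
    ← lie_skew v u, map_neg, LinearMap.neg_apply]
  abel

end StringLie2

open LinearMap in
theorem string_type_jacobiator_general {g : Type*} [LieRing g] [LieAlgebra ℝ g]
    (B : g →ₗ[ℝ] g →ₗ[ℝ] ℝ)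
    (hinv : ∀ x y z : g, B ⁅x, y⁆ z + B y ⁅x, z⁆ = 0)
    (α : ((g →ₗ[ℝ] g) × ℝ) →ₗ[ℝ] (g →ₗ[ℝ] ℝ))
    (hα : ∀ (u : g) (r : ℝ) (v : g),
      α ((LieAlgebra.ad ℝ g u : g →ₗ[ℝ] g), r) v = B u v) :
    -- the action of End⁰ = End(g) × ℝ on End¹ = Hom(g,ℝ)
    let br : ((g →ₗ[ℝ] g) × ℝ) → (g →ₗ[ℝ] ℝ) → (g →ₗ[ℝ] ℝ) :=
      fun X φ => X.2 • φ - φ ∘ₗ X.1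
    -- the commutator on End⁰
    let cbkt : ((g →ₗ[ℝ] g) × ℝ) → ((g →ₗ[ℝ] g) × ℝ) → ((g →ₗ[ℝ] g) × ℝ) :=
      fun X Y => (X.1 ∘ₗ Y.1 - Y.1 ∘ₗ X.1, X.2 * Y.2 - Y.2 * X.2)
    -- the coboundary of α
    let dα : ((g →ₗ[ℝ] g) × ℝ) → ((g →ₗ[ℝ] g) × ℝ) → (g →ₗ[ℝ] ℝ) :=
      fun X Y => br X (α Y) - br Y (α X) - α (cbkt X Y)
    ∀ u v w : g,
      dα ((LieAlgebra.ad ℝ g u : g →ₗ[ℝ] g), 0)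
         ((LieAlgebra.ad ℝ g v : g →ₗ[ℝ] g), 0) w = B ⁅u, v⁆ w ∧
      -- μ₂((ad_u,0),(ad_v,0)) applied to the object w
      (((cbkt ((LieAlgebra.ad ℝ g u : g →ₗ[ℝ] g), 0)
              ((LieAlgebra.ad ℝ g v : g →ₗ[ℝ] g), 0)).1 w,
        dα ((LieAlgebra.ad ℝ g u : g →ₗ[ℝ] g), 0)
           ((LieAlgebra.ad ℝ g v : g →ₗ[ℝ] g), 0) w) : g × ℝ)
        = (⁅⁅u, v⁆, w⁆, B ⁅u, v⁆ w) := by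
  intro br cbkt dα u v w
  have hB : BilinForm.lieInvariant g B := fun x y z => eq_neg_of_add_eq_zero_left (hinv x y z)
  have hcbkt : cbkt ((LieAlgebra.ad ℝ g u : g →ₗ[ℝ] g), 0) ((LieAlgebra.ad ℝ g v : g →ₗ[ℝ] g), 0)
      = ((LieAlgebra.ad ℝ g ⁅u, v⁆ : g →ₗ[ℝ] g), 0) :=
    StringLie2.endCommutator_ad_ad u v
  have hdα : dα ((LieAlgebra.ad ℝ g u : g →ₗ[ℝ] g), 0) ((LieAlgebra.ad ℝ g v : g →ₗ[ℝ] g), 0)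
      = B ⁅u, v⁆ :=
    StringLie2.coboundary_ad_ad hB (fun u v => hα u 0 v) u v
  rw [hcbkt, hdα]
  exact ⟨rfl, rfl⟩

open LinearMap in
/-- For a Lie algebra `g` with symmetric invariant bilinear form `B` and `α` with
`α(ad_u, r)(v) = B(u,v)`, the coboundary satisfies
`dα((ad_u,0),(ad_v,0))(w) = B([u,v],w)`; hence `μ₂((ad_u,0),(ad_v,0))` applied to `w`
yields `([[u,v],w], B([u,v],w))`, the Jacobiator of the string-type Lie 2-algebra. -/
theorem string_type_jacobiator {g : Type*} [LieRing g] [LieAlgebra ℝ g]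
    [FiniteDimensional ℝ g]
    (B : g →ₗ[ℝ] g →ₗ[ℝ] ℝ)
    (hsymm : ∀ x y : g, B x y = B y x)
    (hinv : ∀ x y z : g, B ⁅x, y⁆ z + B y ⁅x, z⁆ = 0)
    (α : ((g →ₗ[ℝ] g) × ℝ) →ₗ[ℝ] (g →ₗ[ℝ] ℝ))
    (hα : ∀ (u : g) (r : ℝ) (v : g),
      α ((LieAlgebra.ad ℝ g u : g →ₗ[ℝ] g), r) v = B u v) :
    -- the action of End⁰ = End(g) × ℝ on End¹ = Hom(g,ℝ)
    let br : ((g →ₗ[ℝ] g) × ℝ) → (g →ₗ[ℝ] ℝ) → (g →ₗ[ℝ] ℝ) :=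
      fun X φ => X.2 • φ - φ ∘ₗ X.1
    -- the commutator on End⁰
    let cbkt : ((g →ₗ[ℝ] g) × ℝ) → ((g →ₗ[ℝ] g) × ℝ) → ((g →ₗ[ℝ] g) × ℝ) :=
      fun X Y => (X.1 ∘ₗ Y.1 - Y.1 ∘ₗ X.1, X.2 * Y.2 - Y.2 * X.2)
    -- the coboundary of α
    let dα : ((g →ₗ[ℝ] g) × ℝ) → ((g →ₗ[ℝ] g) × ℝ) → (g →ₗ[ℝ] ℝ) :=
      fun X Y => br X (α Y) - br Y (α X) - α (cbkt X Y)
    ∀ u v w : g,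
      dα ((LieAlgebra.ad ℝ g u : g →ₗ[ℝ] g), 0)
         ((LieAlgebra.ad ℝ g v : g →ₗ[ℝ] g), 0) w = B ⁅u, v⁆ w ∧
      -- μ₂((ad_u,0),(ad_v,0)) applied to the object w
      (((cbkt ((LieAlgebra.ad ℝ g u : g →ₗ[ℝ] g), 0)
              ((LieAlgebra.ad ℝ g v : g →ₗ[ℝ] g), 0)).1 w,
        dα ((LieAlgebra.ad ℝ g u : g →ₗ[ℝ] g), 0)
           ((LieAlgebra.ad ℝ g v : g →ₗ[ℝ] g), 0) w) : g × ℝ)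
        = (⁅⁅u, v⁆, w⁆, B ⁅u, v⁆ w) :=
  string_type_jacobiator_general B hinv α hα
end
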